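/- Let Λ be a nonempty compact topological space and U : Λ × Λ → ℝ symmetric and lower semicontinuous. Define ε_g(N) = (1/(N(N-1))) · min_{q ∈ Λ^N} ∑_{1≤i<j≤N} U(q_i,q_j). Then the sequence N ↦ ε_g(N) is monotonically increasing: for all N ≥ 2, ε_g(N+1) ≥ ε_g(N). -/

import Mathlib

/-!
Deleting the `k`-th point of an `(N+1)`-point configuration `q` gives an `N`-point
configuration, and each pair of points of `q` survives exactly `N - 1` of the `N + 1`
deletions. Hence `(N - 1) E_{N+1}(q) = ∑ₖ E_N(q without k) ≥ (N + 1) E_g(N)`; minimising over `q`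
gives `(N - 1) E_g(N+1) ≥ (N + 1) E_g(N)`, which is `ε_g(N+1) ≥ ε_g(N)` after dividing by
`(N - 1) N (N + 1)`.
-/

/-- The total pairwise energy of a configuration of `N` points. -/
noncomputable def energy {Λ : Type*} (N : ℕ) (U : Λ → Λ → ℝ) (q : Fin N → Λ) : ℝ :=
  ∑ i : Fin N, ∑ j ∈ Finset.Ioi i, U (q i) (q j)

/-- The pair-specific ground state energy `ε_g(N) = E_g(N)/(N(N-1))`. -/
noncomputable def epsg (Λ : Type*) (N : ℕ) (U : Λ → Λ → ℝ) : ℝ :=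
  sInf (Set.range (energy (Λ := Λ) N U)) / ((N : ℝ) * ((N : ℝ) - 1))

theorem Fin.sum_comp_succAbove {M : Type*} [AddCommGroup M] {n : ℕ} (f : Fin (n + 1) → M)
    (k : Fin (n + 1)) : ∑ i : Fin n, f (k.succAbove i) = ∑ a, f a - f k :=
  eq_sub_of_add_eq' (Fin.sum_univ_succAbove f k).symm

section Energy

variable {Λ : Type*} (U : Λ → Λ → ℝ)

theorem energy_eq_sum_sum_ite {n : ℕ} (q : Fin n → Λ) :
    energy n U q = ∑ i, ∑ j, if i < j then U (q i) (q j) else 0 := by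
  unfold energy
  refine Finset.sum_congr rfl fun i _ => ?_
  rw [← Finset.sum_filter, Finset.filter_lt_eq_Ioi]

theorem energy_comp_succAbove {n : ℕ} (q : Fin (n + 1) → Λ) (k : Fin (n + 1)) :
    energy n U (q ∘ k.succAbove) = energy (n + 1) U q
      - ∑ j, (if k < j then U (q k) (q j) else 0)
      - ∑ i, (if i < k then U (q i) (q k) else 0) := by
  set F : Fin (n + 1) → Fin (n + 1) → ℝ := fun a b => if a < b then U (q a) (q b) else 0
  have hF : ∀ i j : Fin n, (if i < j then U (q (k.succAbove i)) (q (k.succAbove j)) else 0)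
      = F (k.succAbove i) (k.succAbove j) := by
    intro i j
    simp only [F, Fin.succAbove_lt_succAbove_iff]
  simp only [energy_eq_sum_sum_ite, Function.comp_apply, hF, Fin.sum_comp_succAbove,
    Finset.sum_sub_distrib]
  rw [Fin.sum_comp_succAbove (fun a => ∑ b, F a b), Fin.sum_comp_succAbove (fun a => F a k),
    show F k k = 0 from if_neg (lt_irrefl k), sub_zero]

theorem sum_energy_comp_succAbove {n : ℕ} (q : Fin (n + 1) → Λ) :
    ∑ k : Fin (n + 1), energy n U (q ∘ k.succAbove) = ((n : ℝ) - 1) * energy (n + 1) U q := by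
  have hcol : ∑ k, ∑ i, (if i < k then U (q i) (q k) else 0) = energy (n + 1) U q := by
    rw [Finset.sum_comm, energy_eq_sum_sum_ite]
  simp only [energy_comp_succAbove, Finset.sum_sub_distrib, Finset.sum_const, Finset.card_univ,
    Fintype.card_fin, nsmul_eq_mul]
  rw [← energy_eq_sum_sum_ite, hcol]
  push_cast
  ring

theorem lowerSemicontinuous_energy [TopologicalSpace Λ]
    (hU : LowerSemicontinuous (fun p : Λ × Λ => U p.1 p.2)) (n : ℕ) :
    LowerSemicontinuous (energy n U) :=
  lowerSemicontinuous_sum fun i _ => lowerSemicontinuous_sum fun j _ =>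
    hU.comp (g := fun q : Fin n → Λ => (q i, q j))
      ((continuous_apply i).prodMk (continuous_apply j))

theorem bddBelow_range_energy [TopologicalSpace Λ] [CompactSpace Λ]
    (hU : LowerSemicontinuous (fun p : Λ × Λ => U p.1 p.2)) (n : ℕ) :
    BddBelow (Set.range (energy n U)) := by
  simpa only [Set.image_univ] using
    ((lowerSemicontinuous_energy U hU n).lowerSemicontinuousOn _).bddBelow_of_isCompact
      isCompact_univ

end Energy

theorem epsg_le_epsg_succ {Λ : Type*} [Nonempty Λ] (U : Λ → Λ → ℝ) {n : ℕ} (hn : 2 ≤ n)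
    (hbdd : BddBelow (Set.range (energy n U))) : epsg Λ n U ≤ epsg Λ (n + 1) U := by
  set A := sInf (Set.range (energy (Λ := Λ) n U))
  set B := sInf (Set.range (energy (Λ := Λ) (n + 1) U))
  have hn' : (2 : ℝ) ≤ n := by exact_mod_cast hn
  have hpos : (0 : ℝ) < n - 1 := by linarith
  have hB : (n + 1) * A / (n - 1) ≤ B := by
    refine le_csInf (Set.range_nonempty _) ?_
    rintro _ ⟨q, rfl⟩
    rw [div_le_iff₀' hpos, ← sum_energy_comp_succAbove]
    calc (n + 1) * A = ∑ _k : Fin (n + 1), A := by simp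
      _ ≤ ∑ k, energy n U (q ∘ k.succAbove) :=
        Finset.sum_le_sum fun k _ => csInf_le hbdd (Set.mem_range_self _)
  unfold epsg
  push_cast
  calc A / (n * (n - 1)) = (n + 1) * A / (n - 1) / ((n + 1) * n) := by
        field_simp
    _ ≤ B / ((n + 1) * n) := by gcongr
    _ = B / ((n + 1) * (n + 1 - 1)) := by rw [add_sub_cancel_right]

theorem pairSpecific_monotone_general {Λ : Type*} [TopologicalSpace Λ] [CompactSpace Λ]
    [Nonempty Λ] (U : Λ → Λ → ℝ)
    (hlsc : LowerSemicontinuous (fun p : Λ × Λ => U p.1 p.2))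
    (N : ℕ) (hN : 2 ≤ N) :
    epsg Λ (N + 1) U ≥ epsg Λ N U :=
  epsg_le_epsg_succ U hN (bddBelow_range_energy U hlsc N)

/-- the pair-specific ground state energy is monotonically increasing:
`ε_g(N+1) ≥ ε_g(N)` for all `N ≥ 2`. -/
theorem pairSpecific_monotone {Λ : Type*} [TopologicalSpace Λ] [CompactSpace Λ]
    [Nonempty Λ] (U : Λ → Λ → ℝ) (hsym : ∀ x y, U x y = U y x)
    (hlsc : LowerSemicontinuous (fun p : Λ × Λ => U p.1 p.2))
    (N : ℕ) (hN : 2 ≤ N) :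
    epsg Λ (N + 1) U ≥ epsg Λ N U :=
  pairSpecific_monotone_general U hlsc N hN
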